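/- arXiv:2509.23461 — 7 statements merged into one kernel-verified Lean document; each statement's English description precedes it below -/
import Mathlib

section
/- For the Evolved Sampling recursion, the weight at step t decomposes exactly into an exponentially weighted sum of past losses, an exponentially weighted sum of loss differences, and a geometrically small remainder: for every t ≥ 1, w(t) = (1 − β2)·∑_{k=1}^{t} β2^{t−k}·ℓ(k) + (β2 − β1)·∑_{k=1}^{t−1} β2^{t−1−k}·(ℓ(k+1) − ℓ(k)) + β2^{t−1}·( β2·s(0) + (β2 − β1)·(ℓ(1) − s(0)) ). This identity holds for arbitrary real β1, β2. -/
lemma es_sum_succ (β2 : ℝ) (ℓ : ℕ → ℝ) (t : ℕ) :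
    ∑ k ∈ Finset.Icc 1 (t + 1), β2 ^ (t + 1 - k) * ℓ k =
      ℓ (t + 1) + β2 * ∑ k ∈ Finset.Icc 1 t, β2 ^ (t - k) * ℓ k := by
  rw [← Finset.Ico_add_one_right_eq_Icc, Finset.sum_Ico_succ_top (by omega), Finset.Ico_add_one_right_eq_Icc]
  rw [Finset.mul_sum]
  simp only [Nat.sub_self, pow_zero, one_mul]
  rw [add_comm]
  congr 1
  apply Finset.sum_congr rfl
  intro k hk
  simp only [Finset.mem_Icc] at hk
  rw [show t + 1 - k = (t - k) + 1 by omega, pow_succ]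
  ring

lemma es_s_closed (β1 β2 s0 : ℝ) (ℓ s : ℕ → ℝ)
    (hs0 : s 0 = s0)
    (hs : ∀ t : ℕ, 1 ≤ t → s t = β2 * s (t - 1) + (1 - β2) * ℓ t) :
    ∀ t : ℕ, s t = β2 ^ t * s0 + (1 - β2) * ∑ k ∈ Finset.Icc 1 t, β2 ^ (t - k) * ℓ k := by
  intro t
  induction t with
  | zero => simp [hs0]
  | succ n ih =>
    rw [hs (n + 1) (by omega)]
    simp only [Nat.add_sub_cancel]
    rw [ih, es_sum_succ]
    ring

lemma es_abel (β2 : ℝ) (ℓ : ℕ → ℝ) :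
    ∀ t : ℕ, ∑ k ∈ Finset.Icc 1 t, β2 ^ (t - k) * (ℓ (k + 1) - ℓ k) =
      (∑ k ∈ Finset.Icc 1 (t + 1), β2 ^ (t + 1 - k) * ℓ k) - β2 ^ t * ℓ 1 -
        ∑ k ∈ Finset.Icc 1 t, β2 ^ (t - k) * ℓ k := by
  intro t
  induction t with
  | zero => simp
  | succ n ih =>
    have h1 : ∑ k ∈ Finset.Icc 1 (n + 1), β2 ^ (n + 1 - k) * (ℓ (k + 1) - ℓ k) =
        (ℓ (n + 2) - ℓ (n + 1)) + β2 * ∑ k ∈ Finset.Icc 1 n, β2 ^ (n - k) * (ℓ (k + 1) - ℓ k) := by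
      exact es_sum_succ β2 (fun k => ℓ (k + 1) - ℓ k) n
    rw [h1, ih, es_sum_succ β2 ℓ (n + 1), es_sum_succ β2 ℓ n]
    ring

/-- Exact loss-difference decomposition of the Evolved Sampling weights, with an
explicit geometrically small remainder, for arbitrary real β1, β2. -/
theorem evolved_sampling_weight_loss_diff_decomposition
    (β1 β2 s0 : ℝ) (ℓ s w : ℕ → ℝ)
    (hs0 : s 0 = s0)
    (hs : ∀ t : ℕ, 1 ≤ t → s t = β2 * s (t - 1) + (1 - β2) * ℓ t)
    (hw : ∀ t : ℕ, 1 ≤ t → w t = β1 * s (t - 1) + (1 - β1) * ℓ t) :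
    ∀ t : ℕ, 1 ≤ t →
      w t = (1 - β2) * ∑ k ∈ Finset.Icc 1 t, β2 ^ (t - k) * ℓ k +
        (β2 - β1) * ∑ k ∈ Finset.Icc 1 (t - 1), β2 ^ (t - 1 - k) * (ℓ (k + 1) - ℓ k) +
        β2 ^ (t - 1) * (β2 * s 0 + (β2 - β1) * (ℓ 1 - s 0)) := by
  intro t ht
  obtain ⟨n, rfl⟩ : ∃ n, t = n + 1 := ⟨t - 1, by omega⟩
  simp only [Nat.add_sub_cancel]
  rw [hw (n + 1) (by omega)]
  simp only [Nat.add_sub_cancel]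
  rw [es_s_closed β1 β2 s0 ℓ s hs0 hs n, es_abel, es_sum_succ, hs0]
  ring
end

section
/- For the Evolved Sampling recursion with β1, β2 ∈ [0,1], the remainder term in the loss-difference expansion of the weights decays geometrically: if |s(0)| ≤ M and |ℓ(1)| ≤ M for some M ≥ 0, then for every t ≥ 1, | w(t) − (1 − β2)·∑_{k=1}^{t} β2^{t−k}·ℓ(k) − (β2 − β1)·∑_{k=1}^{t−1} β2^{t−1−k}·(ℓ(k+1) − ℓ(k)) | ≤ 3·M·β2^{t−1}. -/
/-- For β1, β2 ∈ [0,1], the remainder term in the loss-difference expansion of the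
Evolved Sampling weights decays geometrically. -/
theorem evolved_sampling_remainder_geometric_decay
    (β1 β2 s0 : ℝ) (hβ1 : β1 ∈ Set.Icc (0:ℝ) 1) (hβ2 : β2 ∈ Set.Icc (0:ℝ) 1)
    (ℓ s w : ℕ → ℝ)
    (hs0 : s 0 = s0)
    (hs : ∀ t : ℕ, 1 ≤ t → s t = β2 * s (t - 1) + (1 - β2) * ℓ t)
    (hw : ∀ t : ℕ, 1 ≤ t → w t = β1 * s (t - 1) + (1 - β1) * ℓ t)
    (M : ℝ) (hM : 0 ≤ M) (hMs : |s 0| ≤ M) (hMl : |ℓ 1| ≤ M) :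
    ∀ t : ℕ, 1 ≤ t →
      |w t - (1 - β2) * ∑ k ∈ Finset.Icc 1 t, β2 ^ (t - k) * ℓ k -
        (β2 - β1) * ∑ k ∈ Finset.Icc 1 (t - 1), β2 ^ (t - 1 - k) * (ℓ (k + 1) - ℓ k)| ≤
      3 * M * β2 ^ (t - 1) := by
  obtain ⟨hb1, hb1'⟩ := hβ1
  obtain ⟨hb2, hb2'⟩ := hβ2
  set B : ℕ → ℝ := fun n => ∑ k ∈ Finset.Icc 1 n, β2 ^ (n - k) * ℓ k with hBdef
  have hB : ∀ n : ℕ, B (n + 1) = β2 * B n + ℓ (n + 1) := by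
    intro n
    have h1 : B (n + 1) = (∑ k ∈ Finset.Icc 1 n, β2 ^ (n + 1 - k) * ℓ k)
        + β2 ^ (n + 1 - (n + 1)) * ℓ (n + 1) := by
      simp only [hBdef]
      exact Finset.sum_Icc_succ_top (by omega) _
    have h2 : ∑ k ∈ Finset.Icc 1 n, β2 ^ (n + 1 - k) * ℓ k
        = β2 * ∑ k ∈ Finset.Icc 1 n, β2 ^ (n - k) * ℓ k := by
      rw [Finset.mul_sum]
      refine Finset.sum_congr rfl fun k hk => ?_
      rw [Finset.mem_Icc] at hk
      have : n + 1 - k = (n - k) + 1 := by omega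
      rw [this, pow_succ]
      ring
    rw [h1, h2]
    simp [hBdef]
  have hC : ∀ n : ℕ, ∑ k ∈ Finset.Icc 1 n, β2 ^ (n - k) * (ℓ (k + 1) - ℓ k)
      = B (n + 1) - β2 ^ n * ℓ 1 - B n := by
    intro n
    induction n with
    | zero => simp [hBdef]
    | succ n ih =>
      have h1 : ∑ k ∈ Finset.Icc 1 (n + 1), β2 ^ (n + 1 - k) * (ℓ (k + 1) - ℓ k)
          = (∑ k ∈ Finset.Icc 1 n, β2 ^ (n + 1 - k) * (ℓ (k + 1) - ℓ k))
            + β2 ^ (n + 1 - (n + 1)) * (ℓ (n + 1 + 1) - ℓ (n + 1)) :=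
        Finset.sum_Icc_succ_top (by omega) _
      have h2 : ∑ k ∈ Finset.Icc 1 n, β2 ^ (n + 1 - k) * (ℓ (k + 1) - ℓ k)
          = β2 * ∑ k ∈ Finset.Icc 1 n, β2 ^ (n - k) * (ℓ (k + 1) - ℓ k) := by
        rw [Finset.mul_sum]
        refine Finset.sum_congr rfl fun k hk => ?_
        rw [Finset.mem_Icc] at hk
        have : n + 1 - k = (n - k) + 1 := by omega
        rw [this, pow_succ]
        ring
      simp only [Nat.sub_self, pow_zero, one_mul] at h1
      rw [h1, h2, ih, hB (n + 1), hB n]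
      ring
  have hsc : ∀ n : ℕ, s n = β2 ^ n * s0 + (1 - β2) * B n := by
    intro n
    induction n with
    | zero => simp [hBdef, hs0]
    | succ n ih =>
      have := hs (n + 1) (by omega)
      simp only [Nat.add_sub_cancel] at this
      rw [this, ih, hB n, pow_succ]
      ring
  intro t ht
  obtain ⟨n, rfl⟩ : ∃ n, t = n + 1 := ⟨t - 1, by omega⟩
  have hwn := hw (n + 1) (by omega)
  simp only [Nat.add_sub_cancel] at hwn ⊢
  rw [hwn, hsc n]
  have hgoal : β1 * (β2 ^ n * s0 + (1 - β2) * B n) + (1 - β1) * ℓ (n + 1)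
      - (1 - β2) * B (n + 1)
      - (β2 - β1) * ∑ k ∈ Finset.Icc 1 n, β2 ^ (n - k) * (ℓ (k + 1) - ℓ k)
      = β2 ^ n * (β1 * s0 + (β2 - β1) * ℓ 1) := by
    rw [hC n, hB n]
    ring
  rw [show (∑ k ∈ Finset.Icc 1 (n + 1), β2 ^ (n + 1 - k) * ℓ k) = B (n + 1) from rfl,
    hgoal, abs_mul, abs_pow, abs_of_nonneg hb2]
  have hK : |β1 * s0 + (β2 - β1) * ℓ 1| ≤ 3 * M := by
    calc |β1 * s0 + (β2 - β1) * ℓ 1| ≤ |β1 * s0| + |(β2 - β1) * ℓ 1| := abs_add_le _ _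
      _ = |β1| * |s0| + |β2 - β1| * |ℓ 1| := by rw [abs_mul, abs_mul]
      _ ≤ 1 * M + 1 * M := by
          have h1 : |β1| ≤ 1 := abs_le.2 ⟨by linarith, hb1'⟩
          have h2 : |β2 - β1| ≤ 1 := abs_le.2 ⟨by linarith, by linarith⟩
          have h3 : |s0| ≤ M := hs0 ▸ hMs
          gcongr
      _ ≤ 3 * M := by linarith
  have hp : (0:ℝ) ≤ β2 ^ n := pow_nonneg hb2 n
  calc β2 ^ n * |β1 * s0 + (β2 - β1) * ℓ 1| ≤ β2 ^ n * (3 * M) := by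
        exact mul_le_mul_of_nonneg_left hK hp
    _ = 3 * M * β2 ^ n := by ring
end

section
/- Stability of the Evolved Sampling transfer function: if β1, β2 ∈ (0,1), then for every real x, |H(ix)| ≤ 1, where H(z) = ((β2 − β1)·z + (1 − β2)) / (z + (1 − β2)). That is, the Evolved Sampling weight signal does not amplify any frequency of the loss signal. -/
/-! On the imaginary axis the numerator and the denominator of `H` have the same real part
`1 - β₂`, while their imaginary parts are `(β₂ - β₁) x` and `x`. Since `|β₂ - β₁| ≤ 1`, the
numerator is never longer than the denominator. -/

open Complex

theorem norm_ofReal_mul_I_mul_add_le {a : ℝ} (ha : |a| ≤ 1) (x c : ℝ) :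
    ‖(a : ℂ) * (I * x) + c‖ ≤ ‖I * x + c‖ := by
  have hsq : (a * x) ^ 2 ≤ x ^ 2 := by
    rw [mul_pow]
    exact mul_le_of_le_one_left (sq_nonneg x) (sq_le_one_iff_abs_le_one a |>.mpr ha)
  calc ‖(a : ℂ) * (I * x) + c‖ = √(c ^ 2 + (a * x) ^ 2) := by
        rw [← norm_add_mul_I]; push_cast; ring_nf
    _ ≤ √(c ^ 2 + x ^ 2) := by gcongr
    _ = ‖I * x + c‖ := by rw [← norm_add_mul_I]; ring_nf

theorem norm_ofReal_mul_I_mul_add_div_le_one {a : ℝ} (ha : |a| ≤ 1) (x c : ℝ) :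
    ‖((a : ℂ) * (I * x) + c) / (I * x + c)‖ ≤ 1 := by
  rw [norm_div]
  exact div_le_one_of_le₀ (norm_ofReal_mul_I_mul_add_le ha x c) (norm_nonneg _)

/-- Stability of the Evolved Sampling transfer function: for β1, β2 ∈ (0,1), the
transfer function has modulus at most 1 on the imaginary axis. -/
theorem evolved_sampling_transfer_function_stable
    (β1 β2 : ℝ) (hβ1 : β1 ∈ Set.Ioo (0:ℝ) 1) (hβ2 : β2 ∈ Set.Ioo (0:ℝ) 1) :
    ∀ x : ℝ,
      ‖(((β2 - β1 : ℝ) : ℂ) * (Complex.I * (x : ℂ)) + ((1 - β2 : ℝ) : ℂ)) /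
          (Complex.I * (x : ℂ) + ((1 - β2 : ℝ) : ℂ))‖ ≤ 1 := by
  have hgain : |β2 - β1| ≤ 1 := abs_sub_le_iff.mpr
    ⟨by linarith [hβ1.1, hβ2.2], by linarith [hβ1.2, hβ2.1]⟩
  exact fun x ↦ norm_ofReal_mul_I_mul_add_div_le_one hgain x (1 - β2)
end

section
/- Derivative bound for the loss-weighted gradient flow under convexity: assume each ℓ_i is nonnegative, and let θ : [0,∞) → E be differentiable with ∑_{j=1}^n ℓ_j(θ(u)) > 0 for all u ≥ 0 and θ′(u) = −∑_{i=1}^n p_i(u)·∇ℓ_i(θ(u)) where p_i(u) = ℓ_i(θ(u)) / ∑_{j=1}^n ℓ_j(θ(u)). Then for every θ₀ ∈ E and every u ≥ 0, the function v ↦ ‖θ(v) − θ₀‖² is differentiable at u and its derivative at u is at most 2·∑_{i=1}^n p_i(u)·( ℓ_i(θ₀) − ℓ_i(θ(u)) ). -/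
/-! Along the flow, `d/du ‖θ u - θ₀‖² = 2 ⟪θ u - θ₀, θ' u⟫ = 2 ∑ pᵢ ⟪∇ℓᵢ(θ u), θ₀ - θ u⟫`, and the
gradient inequality `⟪∇ℓᵢ(x), y - x⟫ ≤ ℓᵢ y - ℓᵢ x` of each convex loss, weighted by the
nonnegative `pᵢ`, bounds this by `2 ∑ pᵢ (ℓᵢ θ₀ - ℓᵢ (θ u))`. -/

open Finset
open scoped RealInnerProductSpace

lemma ConvexOn.fderiv_sub_le {E : Type*} [NormedAddCommGroup E] [NormedSpace ℝ E]
    {s : Set E} {f : E → ℝ} {f' : E →L[ℝ] ℝ} {x y : E}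
    (hf : ConvexOn ℝ s f) (hx : x ∈ s) (hy : y ∈ s) (hf' : HasFDerivAt f f' x) :
    f' (y - x) ≤ f y - f x := by
  -- On the segment `A t = x + t • (y - x)`, the derivative at `0` is at most the slope on `[0, 1]`.
  set A : ℝ →ᵃ[ℝ] E := AffineMap.lineMap x y
  have hA : HasDerivAt A (y - x) 0 := AffineMap.hasDerivAt_lineMap
  have hfA : HasDerivAt (f ∘ A) (f' (y - x)) 0 := by
    simpa [A] using hf'.comp_hasDerivAt_of_eq 0 hA (by simp [A])
  have hconvA : ConvexOn ℝ (A ⁻¹' s) (f ∘ A) := hf.comp_affineMap A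
  have := hconvA.le_slope_of_hasDerivAt (by simpa [A] using hx) (by simpa [A] using hy)
    one_pos hfA
  simpa [slope_def_field, A] using this

lemma ConvexOn.inner_gradient_sub_le {E : Type*} [NormedAddCommGroup E] [InnerProductSpace ℝ E]
    [CompleteSpace E] {s : Set E} {f : E → ℝ} {g x y : E}
    (hf : ConvexOn ℝ s f) (hx : x ∈ s) (hy : y ∈ s) (hg : HasGradientAt f g x) :
    ⟪g, y - x⟫ ≤ f y - f x := by
  simpa using hf.fderiv_sub_le hx hy hg.hasFDerivAt

lemma inner_sub_neg_sum_smul_gradient_le {E ι : Type*} [NormedAddCommGroup E]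
    [InnerProductSpace ℝ E] [CompleteSpace E] {s : Set E} {t : Finset ι}
    {f : ι → E → ℝ} {g : ι → E} {p : ι → ℝ} {x y : E}
    (hf : ∀ i ∈ t, ConvexOn ℝ s (f i)) (hg : ∀ i ∈ t, HasGradientAt (f i) (g i) x)
    (hp : ∀ i ∈ t, 0 ≤ p i) (hx : x ∈ s) (hy : y ∈ s) :
    ⟪x - y, -∑ i ∈ t, p i • g i⟫ ≤ ∑ i ∈ t, p i * (f i y - f i x) := by
  have hneg : ⟪x - y, -∑ i ∈ t, p i • g i⟫ = ∑ i ∈ t, p i * ⟪g i, y - x⟫ := by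
    rw [← neg_sub, inner_neg_neg, real_inner_comm, sum_inner]
    simp_rw [real_inner_smul_left]
  rw [hneg]
  exact sum_le_sum fun i hi =>
    mul_le_mul_of_nonneg_left ((hf i hi).inner_gradient_sub_le hx hy (hg i hi)) (hp i hi)

theorem loss_weighted_gradient_flow_derivative_bound_general
    {E : Type*} [NormedAddCommGroup E] [InnerProductSpace ℝ E] [CompleteSpace E]
    (n : ℕ) (ℓ : Fin n → E → ℝ) (g : Fin n → E → E)
    (hconv : ∀ i, ConvexOn ℝ Set.univ (ℓ i))
    (hgrad : ∀ i x, HasGradientAt (ℓ i) (g i x) x)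
    (hnn : ∀ i x, 0 ≤ ℓ i x)
    (θ : ℝ → E)
    (hθ : ∀ u : ℝ, 0 ≤ u →
      HasDerivAt θ (-(∑ i, (ℓ i (θ u) / ∑ j, ℓ j (θ u)) • g i (θ u))) u) :
    ∀ (θ₀ : E) (u : ℝ), 0 ≤ u →
      DifferentiableAt ℝ (fun v => ‖θ v - θ₀‖ ^ 2) u ∧
      deriv (fun v => ‖θ v - θ₀‖ ^ 2) u ≤
        2 * ∑ i, (ℓ i (θ u) / ∑ j, ℓ j (θ u)) * (ℓ i θ₀ - ℓ i (θ u)) := by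
  intro θ₀ u hu
  have hd := ((hθ u hu).sub_const θ₀).norm_sq
  refine ⟨hd.differentiableAt, ?_⟩
  rw [hd.deriv]
  have hweights : ∀ i ∈ univ, 0 ≤ ℓ i (θ u) / ∑ j, ℓ j (θ u) := fun i _ =>
    div_nonneg (hnn i _) (sum_nonneg fun j _ => hnn j _)
  gcongr
  exact inner_sub_neg_sum_smul_gradient_le (fun i _ => hconv i) (fun i _ => hgrad i _) hweights
    (Set.mem_univ _) (Set.mem_univ _)

/-- Derivative bound for the loss-weighted gradient flow under convexity. -/
theorem loss_weighted_gradient_flow_derivative_bound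
    {E : Type*} [NormedAddCommGroup E] [InnerProductSpace ℝ E] [CompleteSpace E]
    (n : ℕ) (hn : 1 ≤ n) (ℓ : Fin n → E → ℝ) (g : Fin n → E → E)
    (hconv : ∀ i, ConvexOn ℝ Set.univ (ℓ i))
    (hgrad : ∀ i x, HasGradientAt (ℓ i) (g i x) x)
    (hnn : ∀ i x, 0 ≤ ℓ i x)
    (θ : ℝ → E)
    (hpos : ∀ u : ℝ, 0 ≤ u → 0 < ∑ j, ℓ j (θ u))
    (hθ : ∀ u : ℝ, 0 ≤ u →
      HasDerivAt θ (-(∑ i, (ℓ i (θ u) / ∑ j, ℓ j (θ u)) • g i (θ u))) u) :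
    ∀ (θ₀ : E) (u : ℝ), 0 ≤ u →
      DifferentiableAt ℝ (fun v => ‖θ v - θ₀‖ ^ 2) u ∧
      deriv (fun v => ‖θ v - θ₀‖ ^ 2) u ≤
        2 * ∑ i, (ℓ i (θ u) / ∑ j, ℓ j (θ u)) * (ℓ i θ₀ - ℓ i (θ u)) :=
  loss_weighted_gradient_flow_derivative_bound_general n ℓ g hconv hgrad hnn θ hθ
end

section
/- Integral descent bound for the loss-weighted gradient flow at a zero-loss minimizer: assume each ℓ_i is nonnegative and there is θ* ∈ E with ℓ_i(θ*) = 0 for every i. Let θ : [0,∞) → E be continuously differentiable with ∑_{j=1}^n ℓ_j(θ(u)) > 0 for all u ≥ 0 and θ′(u) = −∑_{i=1}^n p_i(u)·∇ℓ_i(θ(u)) where p_i(u) = ℓ_i(θ(u)) / ∑_{j=1}^n ℓ_j(θ(u)). Then for every S > 0, ∫₀^S ( ∑_{i=1}^n ℓ_i(θ(u))² ) / ( ∑_{j=1}^n ℓ_j(θ(u)) ) du ≤ (1/2)·‖θ(0) − θ*‖². -/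
/-!
Convexity and `ℓ i θs = 0` give `ℓ i x ≤ ⟪∇ℓ i x, x - θs⟫`; averaging with the nonnegative
weights `p i` shows that along the flow `(1/2) d/du ‖θ u - θs‖² = ⟪θ' u, θ u - θs⟫` is at most
`-(∑ ℓ i²) / ∑ ℓ j`. Integrating over `[0, S]` and dropping `‖θ S - θs‖² ≥ 0` gives the bound.
-/

open Set
open scoped RealInnerProductSpace

section FirstOrderCondition

variable {E : Type*} [NormedAddCommGroup E]

theorem ConvexOn.add_apply_sub_le_of_hasFDerivAt [NormedSpace ℝ E] {s : Set E} {f : E → ℝ}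
    {f' : E →L[ℝ] ℝ} {x y : E} (hf : ConvexOn ℝ s f) (hx : x ∈ s) (hy : y ∈ s)
    (hf' : HasFDerivAt f f' x) : f x + f' (y - x) ≤ f y := by
  set γ : ℝ →ᵃ[ℝ] E := AffineMap.lineMap x y
  have hγ0 : γ 0 = x := AffineMap.lineMap_apply_zero x y
  have hγ1 : γ 1 = y := AffineMap.lineMap_apply_one x y
  have hline : ConvexOn ℝ (γ ⁻¹' s) (f ∘ γ) := hf.comp_affineMap γ
  have hderiv : HasDerivAt (f ∘ γ) (f' (y - x)) 0 := by
    refine HasFDerivAt.comp_hasDerivAt (0 : ℝ) ?_ AffineMap.hasDerivAt_lineMap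
    rwa [hγ0]
  have := hline.le_slope_of_hasDerivAt (by simpa [hγ0]) (by simpa [hγ1]) one_pos hderiv
  simp only [slope_def_field, Function.comp_apply, hγ0, hγ1, sub_zero, div_one] at this
  linarith

theorem ConvexOn.sub_le_inner_of_hasGradientAt [InnerProductSpace ℝ E] [CompleteSpace E]
    {s : Set E} {f : E → ℝ} {f' x y : E} (hf : ConvexOn ℝ s f) (hx : x ∈ s) (hy : y ∈ s)
    (hf' : HasGradientAt f f' x) : f x - f y ≤ ⟪f', x - y⟫ := by
  have := hf.add_apply_sub_le_of_hasFDerivAt hx hy hf'.hasFDerivAt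
  rw [InnerProductSpace.toDual_apply_apply, ← neg_sub, inner_neg_right] at this
  linarith

end FirstOrderCondition

theorem intervalIntegral_le_half_sq_norm_sub_of_le_neg_inner {E : Type*} [NormedAddCommGroup E]
    [InnerProductSpace ℝ E] {θ v : ℝ → E} {φ : ℝ → ℝ} {c : E} {a b : ℝ} (hab : a ≤ b)
    (hθc : ContinuousOn θ (Icc a b)) (hθ : ∀ u ∈ Ioo a b, HasDerivAt θ (v u) u)
    (hφ : MeasureTheory.IntegrableOn φ (Icc a b))
    (hφle : ∀ u ∈ Ioo a b, φ u ≤ -⟪v u, θ u - c⟫) :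
    ∫ u in a..b, φ u ≤ (‖θ a - c‖ ^ 2 - ‖θ b - c‖ ^ 2) / 2 := by
  have hderiv (u : ℝ) (hu : u ∈ Ioo a b) :
      HasDerivWithinAt (fun t => -(‖θ t - c‖ ^ 2 / 2)) (-⟪v u, θ u - c⟫) (Ioi u) u := by
    refine (((hθ u hu).sub_const c).norm_sq.div_const 2).fun_neg.hasDerivWithinAt.congr_deriv ?_
    rw [real_inner_comm]
    ring
  have hcont : ContinuousOn (fun t => -(‖θ t - c‖ ^ 2 / 2)) (Icc a b) := by fun_prop
  have := intervalIntegral.integral_le_sub_of_hasDeriv_right_of_le hab hcont hderiv hφ hφle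
  linarith

theorem sum_sq_div_sum_le_inner_weighted_gradient {E ι : Type*} [NormedAddCommGroup E]
    [InnerProductSpace ℝ E] [CompleteSpace E] [Fintype ι] {ℓ : ι → E → ℝ} {g : ι → E → E}
    {x θs : E} (hconv : ∀ i, ConvexOn ℝ univ (ℓ i)) (hgrad : ∀ i, HasGradientAt (ℓ i) (g i x) x)
    (hnn : ∀ i, 0 ≤ ℓ i x) (hzero : ∀ i, ℓ i θs = 0) :
    (∑ i, ℓ i x ^ 2) / ∑ j, ℓ j x ≤ ⟪∑ i, (ℓ i x / ∑ j, ℓ j x) • g i x, x - θs⟫ := by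
  have hle (i : ι) : ℓ i x ≤ ⟪g i x, x - θs⟫ := by
    simpa [hzero i] using
      (hconv i).sub_le_inner_of_hasGradientAt (mem_univ x) (mem_univ θs) (hgrad i)
  rw [Finset.sum_div, sum_inner]
  refine Finset.sum_le_sum fun i _ => ?_
  rw [real_inner_smul_left, sq, mul_div_right_comm]
  exact mul_le_mul_of_nonneg_left (hle i) (div_nonneg (hnn i) (Finset.sum_nonneg fun j _ => hnn j))

theorem loss_weighted_gradient_flow_integral_bound_general
    {E : Type*} [NormedAddCommGroup E] [InnerProductSpace ℝ E] [CompleteSpace E]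
    (n : ℕ) (ℓ : Fin n → E → ℝ) (g : Fin n → E → E)
    (hconv : ∀ i, ConvexOn ℝ Set.univ (ℓ i))
    (hgrad : ∀ i x, HasGradientAt (ℓ i) (g i x) x)
    (hnn : ∀ i x, 0 ≤ ℓ i x)
    (θs : E) (hzero : ∀ i, ℓ i θs = 0)
    (θ : ℝ → E)
    (hpos : ∀ u : ℝ, 0 ≤ u → 0 < ∑ j, ℓ j (θ u))
    (hθ : ∀ u : ℝ, 0 ≤ u →
      HasDerivAt θ (-(∑ i, (ℓ i (θ u) / ∑ j, ℓ j (θ u)) • g i (θ u))) u) :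
    ∀ S : ℝ, 0 < S →
      ∫ u in (0:ℝ)..S, (∑ i, (ℓ i (θ u)) ^ 2) / (∑ j, ℓ j (θ u)) ≤
        (1 / 2) * ‖θ 0 - θs‖ ^ 2 := by
  intro S hS
  have hθc : ContinuousOn θ (Icc 0 S) := fun u hu => (hθ u hu.1).continuousAt.continuousWithinAt
  have hℓc (i : Fin n) : Continuous (ℓ i) :=
    continuous_iff_continuousAt.2 fun x => (hgrad i x).continuousAt
  have hint : MeasureTheory.IntegrableOn
      (fun u => (∑ i, (ℓ i (θ u)) ^ 2) / (∑ j, ℓ j (θ u))) (Icc 0 S) := by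
    refine ContinuousOn.integrableOn_Icc (ContinuousOn.div ?_ ?_ fun u hu => (hpos u hu.1).ne')
    · exact continuousOn_finsetSum _ fun i _ => ((hℓc i).comp_continuousOn hθc).pow 2
    · exact continuousOn_finsetSum _ fun i _ => (hℓc i).comp_continuousOn hθc
  calc ∫ u in (0:ℝ)..S, (∑ i, (ℓ i (θ u)) ^ 2) / (∑ j, ℓ j (θ u))
      ≤ (‖θ 0 - θs‖ ^ 2 - ‖θ S - θs‖ ^ 2) / 2 := by
        refine intervalIntegral_le_half_sq_norm_sub_of_le_neg_inner hS.le hθc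
          (fun u hu => hθ u hu.1.le) hint fun u _ => ?_
        rw [inner_neg_left, neg_neg]
        exact sum_sq_div_sum_le_inner_weighted_gradient hconv (fun i => hgrad i _)
          (fun i => hnn i _) hzero
    _ ≤ (1 / 2) * ‖θ 0 - θs‖ ^ 2 := by linarith [sq_nonneg ‖θ S - θs‖]

/-- Integral descent bound for the loss-weighted gradient flow at a zero-loss
minimizer. -/
theorem loss_weighted_gradient_flow_integral_bound
    {E : Type*} [NormedAddCommGroup E] [InnerProductSpace ℝ E] [CompleteSpace E]
    (n : ℕ) (hn : 1 ≤ n) (ℓ : Fin n → E → ℝ) (g : Fin n → E → E)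
    (hconv : ∀ i, ConvexOn ℝ Set.univ (ℓ i))
    (hgrad : ∀ i x, HasGradientAt (ℓ i) (g i x) x)
    (hnn : ∀ i x, 0 ≤ ℓ i x)
    (θs : E) (hzero : ∀ i, ℓ i θs = 0)
    (θ : ℝ → E)
    (hpos : ∀ u : ℝ, 0 ≤ u → 0 < ∑ j, ℓ j (θ u))
    (hθ : ∀ u : ℝ, 0 ≤ u →
      HasDerivAt θ (-(∑ i, (ℓ i (θ u) / ∑ j, ℓ j (θ u)) • g i (θ u))) u)
    (hC1 : ContinuousOn
      (fun u => -(∑ i, (ℓ i (θ u) / ∑ j, ℓ j (θ u)) • g i (θ u))) (Set.Ici 0)) :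
    ∀ S : ℝ, 0 < S →
      ∫ u in (0:ℝ)..S, (∑ i, (ℓ i (θ u)) ^ 2) / (∑ j, ℓ j (θ u)) ≤
        (1 / 2) * ‖θ 0 - θs‖ ^ 2 :=
  loss_weighted_gradient_flow_integral_bound_general n ℓ g hconv hgrad hnn θs hzero θ hpos hθ
end

section
/- Sharper descent bound of the loss-weighted gradient flow at a zero-loss minimizer (Proposition A.1): assume each ℓ_i is nonnegative and there is θ* ∈ E with ℓ_i(θ*) = 0 for every i. Let θ : [0,∞) → E be differentiable with ∑_{j=1}^n ℓ_j(θ(u)) > 0 for all u ≥ 0 and θ′(u) = −∑_{i=1}^n p_i(u)·∇ℓ_i(θ(u)) where p_i(u) = ℓ_i(θ(u)) / ∑_{j=1}^n ℓ_j(θ(u)). Then for every u ≥ 0, the derivative at u of v ↦ ‖θ(v) − θ*‖² is at most −2·( L̂_n(θ(u)) + Δ(u) ), where Δ(u) := ∑_{i=1}^n ( p_i(u) − 1/n )·ℓ_i(θ(u)) = ∑_i ℓ_i(θ(u))² / ∑_j ℓ_j(θ(u)) − L̂_n(θ(u)) ≥ 0. -/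
/-!
Convexity together with `ℓ i θs = 0` gives `ℓ i θ ≤ ⟪∇ℓ i θ, θ - θs⟫`, so along the flow
`d/du ‖θ - θs‖² = -2 ∑ pᵢ ⟪∇ℓ i θ, θ - θs⟫ ≤ -2 ∑ pᵢ ℓ i θ = -2 (∑ ℓᵢ²) / ∑ ℓⱼ`, and this equals
`-2 (L̂ₙ + Δ)`. The gap `Δ = (∑ ℓᵢ²) / ∑ ℓⱼ - (∑ ℓⱼ) / n` is nonnegative by Cauchy–Schwarz,
`(∑ ℓⱼ)² ≤ n ∑ ℓᵢ²`.
-/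

open scoped RealInnerProductSpace
open Finset

theorem ConvexOn.add_fderiv_sub_le {E : Type*} [NormedAddCommGroup E] [NormedSpace ℝ E]
    {s : Set E} {f : E → ℝ} {f' : E →L[ℝ] ℝ} {x y : E} (hf : ConvexOn ℝ s f) (hx : x ∈ s)
    (hy : y ∈ s) (hfx : HasFDerivAt f f' x) : f x + f' (y - x) ≤ f y := by
  let γ := AffineMap.lineMap (k := ℝ) x y
  have hconvex : ConvexOn ℝ (γ ⁻¹' s) (f ∘ γ) := hf.comp_affineMap γ
  have hderiv : HasDerivAt (f ∘ γ) (f' (y - x)) 0 := by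
    have hfx' : HasFDerivAt f f' (γ 0) := by simpa [γ] using hfx
    exact hfx'.comp_hasDerivAt 0 AffineMap.hasDerivAt_lineMap
  have hslope := hconvex.le_slope_of_hasDerivAt (by simpa [γ]) (by simpa [γ]) zero_lt_one hderiv
  simp only [γ, slope_def_field, Function.comp_apply, AffineMap.lineMap_apply_one,
    AffineMap.lineMap_apply_zero, sub_zero, div_one] at hslope
  linarith

theorem ConvexOn.add_inner_sub_le_of_hasGradientAt {E : Type*} [NormedAddCommGroup E]
    [InnerProductSpace ℝ E] [CompleteSpace E] {s : Set E} {f : E → ℝ} {f' x y : E}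
    (hf : ConvexOn ℝ s f) (hx : x ∈ s) (hy : y ∈ s) (hfx : HasGradientAt f f' x) :
    f x + ⟪f', y - x⟫ ≤ f y :=
  hf.add_fderiv_sub_le hx hy hfx.hasFDerivAt

theorem sum_mul_sub_le_inner_sum_smul_of_hasGradientAt {ι E : Type*} [NormedAddCommGroup E]
    [InnerProductSpace ℝ E] [CompleteSpace E] {s : Finset ι} {t : Set E} {f : ι → E → ℝ}
    {g : ι → E} {p : ι → ℝ} {x y : E} (hf : ∀ i ∈ s, ConvexOn ℝ t (f i))
    (hg : ∀ i ∈ s, HasGradientAt (f i) (g i) x) (hp : ∀ i ∈ s, 0 ≤ p i) (hx : x ∈ t)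
    (hy : y ∈ t) : ∑ i ∈ s, p i * (f i x - f i y) ≤ ⟪∑ i ∈ s, p i • g i, x - y⟫ := by
  rw [sum_inner]
  gcongr with i hi
  rw [real_inner_smul_left]
  gcongr
  · exact hp i hi
  · have hsupport := (hf i hi).add_inner_sub_le_of_hasGradientAt hx hy (hg i hi)
    rw [← neg_sub x y, inner_neg_right] at hsupport
    linarith

theorem sum_div_sub_mul_self {ι : Type*} (s : Finset ι) (f : ι → ℝ) (S c : ℝ) :
    ∑ i ∈ s, (f i / S - c) * f i = (∑ i ∈ s, f i ^ 2) / S - c * ∑ i ∈ s, f i := by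
  simp only [sub_mul, sum_sub_distrib, sum_div, mul_sum, div_mul_eq_mul_div, sq]

theorem sum_div_card_le_sum_sq_div_sum {ι : Type*} {s : Finset ι} {f : ι → ℝ}
    (hf : 0 ≤ ∑ i ∈ s, f i) : (∑ i ∈ s, f i) / #s ≤ (∑ i ∈ s, f i ^ 2) / ∑ i ∈ s, f i := by
  obtain hf | hf := hf.eq_or_lt
  · simp [← hf]
  obtain hs | hs := (#s).eq_zero_or_pos
  · simp only [hs, Nat.cast_zero, div_zero]
    positivity
  rw [div_le_div_iff₀ (by exact_mod_cast hs) hf]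
  nlinarith [sq_sum_le_card_mul_sum_sq (s := s) (f := f)]

theorem loss_weighted_gradient_flow_sharper_descent_general
    {E : Type*} [NormedAddCommGroup E] [InnerProductSpace ℝ E] [CompleteSpace E]
    (n : ℕ) (ℓ : Fin n → E → ℝ) (g : Fin n → E → E)
    (hconv : ∀ i, ConvexOn ℝ Set.univ (ℓ i))
    (hgrad : ∀ i x, HasGradientAt (ℓ i) (g i x) x)
    (hnn : ∀ i x, 0 ≤ ℓ i x)
    (θs : E) (hzero : ∀ i, ℓ i θs = 0)
    (θ : ℝ → E)
    (hpos : ∀ u : ℝ, 0 ≤ u → 0 < ∑ j, ℓ j (θ u))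
    (hθ : ∀ u : ℝ, 0 ≤ u →
      HasDerivAt θ (-(∑ i, (ℓ i (θ u) / ∑ j, ℓ j (θ u)) • g i (θ u))) u) :
    ∀ u : ℝ, 0 ≤ u →
      0 ≤ ∑ i, (ℓ i (θ u) / (∑ j, ℓ j (θ u)) - 1 / (n : ℝ)) * ℓ i (θ u) ∧
      ∑ i, (ℓ i (θ u) / (∑ j, ℓ j (θ u)) - 1 / (n : ℝ)) * ℓ i (θ u) =
        (∑ i, (ℓ i (θ u)) ^ 2) / (∑ j, ℓ j (θ u)) - (1 / (n : ℝ)) * ∑ i, ℓ i (θ u) ∧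
      deriv (fun v => ‖θ v - θs‖ ^ 2) u ≤
        -2 * ((1 / (n : ℝ)) * ∑ i, ℓ i (θ u) +
          ∑ i, (ℓ i (θ u) / (∑ j, ℓ j (θ u)) - 1 / (n : ℝ)) * ℓ i (θ u)) := by
  intro u hu
  set S := ∑ j, ℓ j (θ u)
  have hΔ := sum_div_sub_mul_self univ (fun i ↦ ℓ i (θ u)) S (1 / n)
  refine ⟨?_, hΔ, ?_⟩
  · rw [hΔ, sub_nonneg, one_div_mul_eq_div]
    simpa using sum_div_card_le_sum_sq_div_sum (s := univ) (hpos u hu).le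
  · have hdescent := sum_mul_sub_le_inner_sum_smul_of_hasGradientAt (s := univ)
      (p := fun i ↦ ℓ i (θ u) / S) (fun i _ ↦ hconv i) (fun i _ ↦ hgrad i (θ u))
      (fun i _ ↦ div_nonneg (hnn i _) (hpos u hu).le) (Set.mem_univ (θ u)) (Set.mem_univ θs)
    simp only [hzero, sub_zero, div_mul_eq_mul_div, ← sq, ← sum_div] at hdescent
    rw [((hθ u hu).sub_const θs).norm_sq.deriv, hΔ, inner_neg_right, real_inner_comm]
    linarith

/-- Sharper descent bound of the loss-weighted gradient flow at a zero-loss minimizer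
(Proposition A.1), with the gap Δ(u) nonnegative and equal to the self-weighted minus
uniform average of losses. -/
theorem loss_weighted_gradient_flow_sharper_descent
    {E : Type*} [NormedAddCommGroup E] [InnerProductSpace ℝ E] [CompleteSpace E]
    (n : ℕ) (hn : 1 ≤ n) (ℓ : Fin n → E → ℝ) (g : Fin n → E → E)
    (hconv : ∀ i, ConvexOn ℝ Set.univ (ℓ i))
    (hgrad : ∀ i x, HasGradientAt (ℓ i) (g i x) x)
    (hnn : ∀ i x, 0 ≤ ℓ i x)
    (θs : E) (hzero : ∀ i, ℓ i θs = 0)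
    (θ : ℝ → E)
    (hpos : ∀ u : ℝ, 0 ≤ u → 0 < ∑ j, ℓ j (θ u))
    (hθ : ∀ u : ℝ, 0 ≤ u →
      HasDerivAt θ (-(∑ i, (ℓ i (θ u) / ∑ j, ℓ j (θ u)) • g i (θ u))) u) :
    ∀ u : ℝ, 0 ≤ u →
      0 ≤ ∑ i, (ℓ i (θ u) / (∑ j, ℓ j (θ u)) - 1 / (n : ℝ)) * ℓ i (θ u) ∧
      ∑ i, (ℓ i (θ u) / (∑ j, ℓ j (θ u)) - 1 / (n : ℝ)) * ℓ i (θ u) =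
        (∑ i, (ℓ i (θ u)) ^ 2) / (∑ j, ℓ j (θ u)) - (1 / (n : ℝ)) * ∑ i, ℓ i (θ u) ∧
      deriv (fun v => ‖θ v - θs‖ ^ 2) u ≤
        -2 * ((1 / (n : ℝ)) * ∑ i, ℓ i (θ u) +
          ∑ i, (ℓ i (θ u) / (∑ j, ℓ j (θ u)) - 1 / (n : ℝ)) * ℓ i (θ u)) :=
  loss_weighted_gradient_flow_sharper_descent_general n ℓ g hconv hgrad hnn θs hzero θ hpos hθ
end

section
/- DRO reformulation of Evolved Sampling (Proposition A.3): assume β1 ≠ 1. For t ≥ 1, define the reference loss ℓ^ref(t) := ((1 − 2β1 + β1·β2)/(1 − β1))·ℓ(t) + (β1·(1 − β2)²/(1 − β1))·∑_{k=1}^{t−1} β2^{t−1−k}·ℓ(k) + (β1·(1 − β2)·β2^{t−1}/(1 − β1))·s(0). Then the Evolved Sampling weight update coincides with a gradient-ascent step on the excess loss: for every t ≥ 1, w(t+1) = w(t) + (1 − β1)·( ℓ(t+1) − ℓ^ref(t) ). -/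
lemma evolved_sampling_score_closed_form
    (β2 s0 : ℝ) (ℓ s : ℕ → ℝ)
    (hs : ∀ t : ℕ, 1 ≤ t → s t = β2 * s (t - 1) + (1 - β2) * ℓ t) :
    ∀ t : ℕ, s t = (1 - β2) * ∑ k ∈ Finset.Icc 1 t, β2 ^ (t - k) * ℓ k + β2 ^ t * s 0 := by
  intro t
  induction t with
  | zero => simp
  | succ n ih =>
    rw [hs (n + 1) (by omega)]
    simp only [Nat.add_sub_cancel]
    rw [ih, Finset.sum_Icc_succ_top (by omega)]
    have hsum : ∑ k ∈ Finset.Icc 1 n, β2 ^ (n + 1 - k) * ℓ k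
        = β2 * ∑ k ∈ Finset.Icc 1 n, β2 ^ (n - k) * ℓ k := by
      rw [Finset.mul_sum]
      refine Finset.sum_congr rfl fun k hk => ?_
      have hk' : k ≤ n := (Finset.mem_Icc.mp hk).2
      rw [show n + 1 - k = (n - k) + 1 by omega, pow_succ]
      ring
    rw [hsum]
    simp only [Nat.sub_self, pow_zero, one_mul]
    ring

/-- DRO reformulation of Evolved Sampling (Proposition A.3): the Evolved Sampling
weight update coincides with a gradient-ascent step on the excess loss with respect
to the explicit historical reference loss. -/
theorem evolved_sampling_dro_reformulation
    (β1 β2 s0 : ℝ) (hβ1 : β1 ≠ 1) (ℓ s w : ℕ → ℝ)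
    (hs0 : s 0 = s0)
    (hs : ∀ t : ℕ, 1 ≤ t → s t = β2 * s (t - 1) + (1 - β2) * ℓ t)
    (hw : ∀ t : ℕ, 1 ≤ t → w t = β1 * s (t - 1) + (1 - β1) * ℓ t) :
    ∀ t : ℕ, 1 ≤ t →
      w (t + 1) = w t + (1 - β1) *
        (ℓ (t + 1) -
          (((1 - 2 * β1 + β1 * β2) / (1 - β1)) * ℓ t +
            (β1 * (1 - β2) ^ 2 / (1 - β1)) *
              ∑ k ∈ Finset.Icc 1 (t - 1), β2 ^ (t - 1 - k) * ℓ k +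
            (β1 * (1 - β2) * β2 ^ (t - 1) / (1 - β1)) * s 0)) := by
  intro t ht
  obtain ⟨n, rfl⟩ : ∃ n, t = n + 1 := ⟨t - 1, by omega⟩
  have hb : (1 : ℝ) - β1 ≠ 0 := sub_ne_zero.mpr (Ne.symm hβ1)
  have hcf := evolved_sampling_score_closed_form β2 s0 ℓ s hs n
  rw [hw (n + 1 + 1) (by omega), hw (n + 1) (by omega)]
  simp only [Nat.add_sub_cancel]
  rw [hs (n + 1) (by omega)]
  simp only [Nat.add_sub_cancel]
  rw [hcf]
  field_simp
  ring
end
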